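/- For n ≥ 2 and every integer 1 < k ≤ 2^r: N_r(k) = max{ N_r(j) + (n−1)·N_r(i) : i + j = k, 0 ≤ i ≤ j }. -/

import Mathlib

/-!
Splitting on the first letter of `σ` gives `f_{r+1}(∧σ) = f_r(σ)` and
`f_{r+1}(∨σ) = n^r + (n-1) f_r(σ)`, so the values at level `r + 1` are those at level `r`
together with their images under `v ↦ n^r + (n-1) v`. Hence `N_r(k) = N(k)` for `k ≤ 2^r`, where
`N = Nrec n` is the function with `N(2^r + t) = n^r + (n-1) N(t)` for `t ≤ 2^r`; equivalently
`N(2k) = n N(k)` and `N(2k+1) = N(k+1) + (n-1) N(k)`. The latter says that the balanced split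
`i = ⌊k/2⌋` attains the maximum, and `N(j) + (n-1) N(i) ≤ N(i+j)` for `i ≤ j` follows by
induction on `i + j`, distinguishing the parities of `i` and `j`.
-/
/-- Whether the `j`-th coordinate of the edge `e` equals the distinguished vertex
(the first vertex of its side, representing `v_{j+1} = 1`). -/
def vcond {n r : ℕ} (e : Fin r → Fin n) (j : ℕ) : Bool :=
  if h : j < r then decide ((e ⟨j, h⟩ : ℕ) = 0) else false

/-- The nested condition `v_{j+1} ∈ e σ₁ (v_{j+2} ∈ e σ₂ (⋯))` determined by a
sequence `σ` over `{∧, ∨}` (where `false` encodes `∧` and `true` encodes `∨`). -/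
def edgeCond {n r : ℕ} (e : Fin r → Fin n) : ℕ → List Bool → Bool
  | j, [] => vcond e j
  | j, false :: s => vcond e j && edgeCond e (j + 1) s
  | j, true :: s => vcond e j || edgeCond e (j + 1) s

/-- `F_r(σ)`: the set of edges of `[n]^r` satisfying the nested condition given by `σ`. -/
def Fset (n r : ℕ) (σ : List Bool) : Finset (Fin r → Fin n) :=
  Finset.univ.filter (fun e => edgeCond e 0 σ = true)

/-- `f_r(σ) = |F_r(σ)|`. -/
def fval (n r : ℕ) (σ : List Bool) : ℕ := (Fset n r σ).card

/-- `Ψ_r`: the sequences over `{∧, ∨}` of length at most `r - 1`. -/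
def PsiSet (r : ℕ) : Finset (List Bool) :=
  (Finset.range r).biUnion (fun m => (Finset.univ : Finset (Fin m → Bool)).image List.ofFn)

/-- The set of values `{f_r(σ) : σ ∈ Σ_r}`, where `f_r(α) = 0` and `f_r(ω) = n ^ r`. -/
def Nvals (n r : ℕ) : Finset ℕ :=
  insert 0 (insert (n ^ r) ((PsiSet r).image (fval n r)))

/-- `N_r(i)`: the `(i+1)`-st smallest element of `{f_r(σ) : σ ∈ Σ_r}`. -/
def Nseq (n r i : ℕ) : ℕ := (Finset.sort (Nvals n r) (· ≤ ·)).getD i 0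

open Finset

section Counting

variable {n m : ℕ}

theorem card_filter_fin_cons_and {α : Type*} [Fintype α] (p : α → Prop) [DecidablePred p]
    (Q : (Fin m → α) → Prop) [DecidablePred Q] :
    #{e : Fin (m + 1) → α | p (e 0) ∧ Q (Fin.tail e)} = #{x | p x} * #{f | Q f} := by
  rw [← card_product, ← filter_product]
  exact card_equiv (Fin.consEquiv fun _ => α).symm (by simp)

theorem card_filter_fin_cons_or {α : Type*} [Fintype α] (p : α → Prop) [DecidablePred p]
    (Q : (Fin m → α) → Prop) [DecidablePred Q] :
    #{e : Fin (m + 1) → α | p (e 0) ∨ Q (Fin.tail e)} =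
      #{x | p x} * Fintype.card α ^ m + #{x | ¬p x} * #{f | Q f} := by
  rw [← card_filter_add_card_filter_not (fun e : Fin (m + 1) → α => p (e 0)),
    filter_filter, filter_filter]
  have hp := card_filter_fin_cons_and p fun _ : Fin m → α => True
  have hnp := card_filter_fin_cons_and (¬p ·) Q
  simp only [and_true, filter_true, card_univ, Fintype.card_fun, Fintype.card_fin] at hp
  rw [← hp, ← hnp]
  congr 2 <;> ext e <;> simp only [mem_filter, mem_univ, true_and] <;> tauto

theorem vcond_zero (e : Fin (m + 1) → Fin n) : vcond e 0 = decide ((e 0 : ℕ) = 0) :=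
  dif_pos m.succ_pos

theorem vcond_succ (e : Fin (m + 1) → Fin n) (j : ℕ) :
    vcond e (j + 1) = vcond (Fin.tail e) j := by
  unfold vcond
  by_cases h : j < m
  · rw [dif_pos (by omega), dif_pos h]; rfl
  · rw [dif_neg (by omega), dif_neg h]

theorem edgeCond_succ (e : Fin (m + 1) → Fin n) (s : List Bool) (j : ℕ) :
    edgeCond e (j + 1) s = edgeCond (Fin.tail e) j s := by
  induction s generalizing j with
  | nil => simp [edgeCond, vcond_succ]
  | cons b s ih => cases b <;> simp [edgeCond, vcond_succ, ih]

theorem card_filter_val_eq_zero (hn : 1 ≤ n) : #{x : Fin n | (x : ℕ) = 0} = 1 := by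
  obtain ⟨n, rfl⟩ : ∃ k, n = k + 1 := ⟨n - 1, by omega⟩
  exact card_eq_one.mpr ⟨0, by ext x; simp [Fin.val_eq_zero_iff]⟩

theorem card_filter_val_ne_zero (hn : 1 ≤ n) : #{x : Fin n | ¬(x : ℕ) = 0} = n - 1 := by
  have := card_filter_add_card_filter_not (s := univ) (fun x : Fin n => (x : ℕ) = 0)
  rw [card_filter_val_eq_zero hn, card_univ, Fintype.card_fin] at this
  omega

theorem fval_succ_nil (hn : 1 ≤ n) : fval n (m + 1) [] = n ^ m := by
  have h := card_filter_fin_cons_and (fun x : Fin n => (x : ℕ) = 0)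
    fun _ : Fin m → Fin n => True
  simp only [and_true, filter_true, card_univ, Fintype.card_fun, Fintype.card_fin,
    card_filter_val_eq_zero hn, one_mul] at h
  rw [← h, fval, Fset]
  simp only [edgeCond, vcond_zero, decide_eq_true_eq]

theorem fval_succ_and (hn : 1 ≤ n) (s : List Bool) :
    fval n (m + 1) (false :: s) = fval n m s := by
  have h := card_filter_fin_cons_and (fun x : Fin n => (x : ℕ) = 0)
    fun f : Fin m → Fin n => edgeCond f 0 s
  rw [card_filter_val_eq_zero hn, one_mul] at h
  simpa [fval, Fset, edgeCond, vcond_zero, edgeCond_succ] using h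

theorem fval_succ_or (hn : 1 ≤ n) (s : List Bool) :
    fval n (m + 1) (true :: s) = n ^ m + (n - 1) * fval n m s := by
  have h := card_filter_fin_cons_or (fun x : Fin n => (x : ℕ) = 0)
    fun f : Fin m → Fin n => edgeCond f 0 s
  rw [card_filter_val_eq_zero hn, card_filter_val_ne_zero hn, Fintype.card_fin, one_mul] at h
  simpa [fval, Fset, edgeCond, vcond_zero, edgeCond_succ] using h

end Counting

def Nrec (n : ℕ) : ℕ → ℕ
  | 0 => 0
  | 1 => 1
  | k + 2 => Nrec n (k + 2 - (k + 2) / 2) + (n - 1) * Nrec n ((k + 2) / 2)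

namespace Nrec

variable {n : ℕ}

theorem eq_split_half (k : ℕ) : Nrec n k = Nrec n (k - k / 2) + (n - 1) * Nrec n (k / 2) := by
  match k with
  | 0 => simp [Nrec]
  | 1 => simp [Nrec]
  | k + 2 => rw [Nrec]

theorem two_mul (k : ℕ) : Nrec n (2 * k) = Nrec n k + (n - 1) * Nrec n k := by
  rw [eq_split_half, show 2 * k / 2 = k by omega, show 2 * k - k = k by omega]

theorem two_mul_add_one (k : ℕ) :
    Nrec n (2 * k + 1) = Nrec n (k + 1) + (n - 1) * Nrec n k := by
  rw [eq_split_half, show (2 * k + 1) / 2 = k by omega, show 2 * k + 1 - k = k + 1 by omega]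

theorem two_pow_add (hn : 1 ≤ n) (r : ℕ) {t : ℕ} (ht : t ≤ 2 ^ r) :
    Nrec n (2 ^ r + t) = n ^ r + (n - 1) * Nrec n t := by
  obtain ⟨q, rfl⟩ : ∃ q, n = q + 1 := ⟨n - 1, by omega⟩
  simp only [Nat.add_sub_cancel]
  induction r generalizing t with
  | zero =>
    interval_cases t <;> simp [Nrec]
  | succ r ih =>
    obtain ⟨t, rfl | rfl⟩ := Nat.even_or_odd' t
    · rw [show 2 ^ (r + 1) + 2 * t = 2 * (2 ^ r + t) by ring, two_mul, two_mul,
        ih (by omega)]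
      simp only [Nat.add_sub_cancel]
      ring
    · rw [show 2 ^ (r + 1) + (2 * t + 1) = 2 * (2 ^ r + t) + 1 by ring, two_mul_add_one,
        two_mul_add_one, add_assoc, ih (by omega), ih (by omega)]
      simp only [Nat.add_sub_cancel]
      ring

theorem strictMono (hn : 2 ≤ n) : StrictMono (Nrec n) := by
  refine strictMono_nat_of_lt_succ fun k => ?_
  induction k using Nat.strong_induction_on with
  | _ k ih =>
    obtain ⟨k, rfl | rfl⟩ := Nat.even_or_odd' k
    · rcases Nat.eq_zero_or_pos k with rfl | hk
      · simp [Nrec]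
      · rw [two_mul, two_mul_add_one]
        have := ih k (by omega)
        omega
    · rw [two_mul_add_one, show 2 * k + 1 + 1 = 2 * (k + 1) by ring, two_mul]
      have := Nat.mul_lt_mul_of_pos_left (ih k (by omega)) (by omega : 0 < n - 1)
      omega

theorem add_sub_one_mul_le (hn : 2 ≤ n) {a b : ℕ} (hab : a ≤ b) :
    Nrec n b + (n - 1) * Nrec n a ≤ Nrec n (a + b) := by
  induction h : a + b using Nat.strong_induction_on generalizing a b with
  | _ k ih =>
  subst h
  have IH (i j s : ℕ) (hij : i ≤ j) (hs : i + j = s) (hlt : s < a + b) :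
      Nrec n j + (n - 1) * Nrec n i ≤ Nrec n s := ih s hlt hij hs
  rcases Nat.eq_zero_or_pos a with rfl | ha
  · simp [Nrec]
  rcases hab.eq_or_lt with rfl | hab
  · rw [← Nat.two_mul, two_mul]
  obtain ⟨a, rfl | rfl⟩ := Nat.even_or_odd' a <;>
    obtain ⟨b, rfl | rfl⟩ := Nat.even_or_odd' b
  · rw [show 2 * a + 2 * b = 2 * (a + b) by ring, two_mul, two_mul, two_mul]
    have h₁ := IH a b _ (by omega) rfl (by omega)
    have h₂ := Nat.mul_le_mul_left (n - 1) h₁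
    linarith
  · rw [show 2 * a + (2 * b + 1) = 2 * (a + b) + 1 by ring, two_mul, two_mul_add_one,
      two_mul_add_one]
    have h₁ := IH a (b + 1) (a + b + 1) (by omega) (by omega) (by omega)
    have h₂ := Nat.mul_le_mul_left (n - 1) (IH a b _ (by omega) rfl (by omega))
    linarith
  · rw [show 2 * a + 1 + 2 * b = 2 * (a + b) + 1 by ring, two_mul, two_mul_add_one,
      two_mul_add_one]
    have h₁ := IH (a + 1) b (a + b + 1) (by omega) (by omega) (by omega)
    have h₂ := Nat.mul_le_mul_left (n - 1) (IH a b _ (by omega) rfl (by omega))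
    linarith
  · rw [show 2 * a + 1 + (2 * b + 1) = 2 * (a + b + 1) by ring, two_mul, two_mul_add_one,
      two_mul_add_one]
    have h₁ := IH a (b + 1) (a + b + 1) (by omega) (by omega) (by omega)
    have h₂ := Nat.mul_le_mul_left (n - 1)
      (IH (a + 1) b (a + b + 1) (by omega) (by omega) (by omega))
    -- `h₁ + (n - 1) h₂` gives `Nrec n a` and `Nrec n (a + 1)` each other's weights in the goal;
    -- by monotonicity the swap only helps (rearrangement inequality)
    have h₃ := Nat.mul_le_mul_left (n - 1)
      (mul_add_mul_le_mul_add_mul (by omega : 1 ≤ n - 1) ((strictMono hn).monotone a.le_succ))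
    linarith

end Nrec

section Values

variable {n : ℕ}

theorem mem_PsiSet {r : ℕ} {σ : List Bool} : σ ∈ PsiSet r ↔ σ.length < r := by
  simp only [PsiSet, mem_biUnion, mem_range, mem_image, mem_univ, true_and]
  constructor
  · rintro ⟨m, hm, f, rfl⟩
    simpa using hm
  · intro h
    exact ⟨σ.length, h, σ.get, List.ofFn_get σ⟩

theorem mem_Nvals_succ (hn : 1 ≤ n) {r x : ℕ} :
    x ∈ Nvals n (r + 1) ↔ x ∈ Nvals n r ∨ ∃ v ∈ Nvals n r, n ^ r + (n - 1) * v = x := by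
  have hpow : n ^ r + (n - 1) * n ^ r = n ^ (r + 1) := by
    obtain ⟨q, rfl⟩ : ∃ q, n = q + 1 := ⟨n - 1, by omega⟩
    simp only [Nat.add_sub_cancel]
    ring
  simp only [Nvals, mem_insert, mem_image, mem_PsiSet]
  constructor
  · rintro (rfl | rfl | ⟨σ, hσ, rfl⟩)
    · exact .inl (.inl rfl)
    · exact .inr ⟨n ^ r, .inr (.inl rfl), hpow⟩
    · rcases σ with _ | ⟨_ | _, s⟩
      · exact .inl (.inr (.inl (fval_succ_nil hn)))
      · exact .inl (.inr (.inr ⟨s, by simpa using hσ, (fval_succ_and hn s).symm⟩))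
      · exact .inr ⟨fval n r s, .inr (.inr ⟨s, by simpa using hσ, rfl⟩),
          (fval_succ_or hn s).symm⟩
  · rintro ((rfl | rfl | ⟨σ, hσ, rfl⟩) | ⟨v, (rfl | rfl | ⟨σ, hσ, rfl⟩), rfl⟩)
    · exact .inl rfl
    · exact .inr (.inr ⟨[], by simp, fval_succ_nil hn⟩)
    · exact .inr (.inr ⟨false :: σ, by simpa using hσ, fval_succ_and hn σ⟩)
    · exact .inr (.inr ⟨[], by simp, by simp [fval_succ_nil hn]⟩)
    · exact .inr (.inl hpow)
    · exact .inr (.inr ⟨true :: σ, by simpa using hσ, fval_succ_or hn σ⟩)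

theorem mem_Nvals (hn : 1 ≤ n) {r x : ℕ} :
    x ∈ Nvals n r ↔ ∃ k ≤ 2 ^ r, Nrec n k = x := by
  induction r generalizing x with
  | zero =>
    simp only [Nvals, PsiSet, range_zero, biUnion_empty, image_empty, pow_zero, mem_insert,
      notMem_empty, or_false]
    constructor
    · rintro (rfl | rfl)
      exacts [⟨0, by simp [Nrec]⟩, ⟨1, by simp [Nrec]⟩]
    · rintro ⟨k, hk, rfl⟩
      interval_cases k <;> simp [Nrec]
  | succ r ih =>
    simp only [mem_Nvals_succ hn, ih]
    constructor
    · rintro (⟨k, hk, rfl⟩ | ⟨_, ⟨t, ht, rfl⟩, rfl⟩)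
      · exact ⟨k, by rw [pow_succ]; omega, rfl⟩
      · exact ⟨2 ^ r + t, by rw [pow_succ]; omega, Nrec.two_pow_add hn r ht⟩
    · rintro ⟨k, hk, rfl⟩
      by_cases hkr : k ≤ 2 ^ r
      · exact .inl ⟨k, hkr, rfl⟩
      · obtain ⟨t, rfl⟩ : ∃ t, k = 2 ^ r + t := ⟨k - 2 ^ r, by omega⟩
        exact .inr ⟨_, ⟨t, by rw [pow_succ] at hk; omega, rfl⟩,
          (Nrec.two_pow_add hn r (by rw [pow_succ] at hk; omega)).symm⟩

theorem Nvals_eq_map (hn : 2 ≤ n) (r : ℕ) :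
    Nvals n r = (range (2 ^ r + 1)).map ⟨Nrec n, (Nrec.strictMono hn).injective⟩ := by
  ext x
  simp [mem_Nvals (by omega : 1 ≤ n)]

theorem Nseq_eq_Nrec (hn : 2 ≤ n) {r k : ℕ} (hk : k ≤ 2 ^ r) : Nseq n r k = Nrec n k := by
  rw [Nseq, Nvals_eq_map hn, ← ((Nrec.strictMono hn).strictMonoOn _).map_finsetSort,
    sort_range, List.getD_eq_getElem _ _ (by simp; omega)]
  simp

end Values

theorem stmt8_general (n r k : ℕ) (hn : 2 ≤ n) (hk2 : k ≤ 2 ^ r) :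
    IsGreatest {m : ℕ | ∃ i j : ℕ, i ≤ j ∧ i + j = k ∧
      m = Nseq n r j + (n - 1) * Nseq n r i} (Nseq n r k) := by
  have hN {i : ℕ} (hi : i ≤ k) : Nseq n r i = Nrec n i := Nseq_eq_Nrec hn (hi.trans hk2)
  refine ⟨⟨k / 2, k - k / 2, by omega, by omega, ?_⟩, ?_⟩
  · rw [hN le_rfl, hN (by omega), hN (by omega), Nrec.eq_split_half]
  · rintro _ ⟨i, j, hij, rfl, rfl⟩
    rw [hN le_rfl, hN (by omega), hN (by omega)]
    exact Nrec.add_sub_one_mul_le hn hij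

theorem stmt8 (n r k : ℕ) (hn : 2 ≤ n) (hk1 : 1 < k) (hk2 : k ≤ 2 ^ r) :
    IsGreatest {m : ℕ | ∃ i j : ℕ, i ≤ j ∧ i + j = k ∧
      m = Nseq n r j + (n - 1) * Nseq n r i} (Nseq n r k) :=
  stmt8_general n r k hn hk2
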